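/- For every finite connected simple graph G with n ≥ 3 vertices and at most 3n − 6 edges (a bound satisfied by every simple planar graph on n ≥ 3 vertices), the number of spanning trees satisfies T(G) < 6ⁿ. -/

import Mathlib

open SimpleGraph

/-- The edge set `s ⊆ E(G)` spans a tree: the graph on `V` with edge set `s` is
connected and acyclic. -/
def IsSpanningTreeEdgeSet {V : Type*} (G : SimpleGraph V) (s : Set (Sym2 V)) : Prop :=
  s ⊆ G.edgeSet ∧ (SimpleGraph.fromEdgeSet s).Connected ∧
    (SimpleGraph.fromEdgeSet s).IsAcyclic

/-!
Root every spanning tree at a fixed vertex `r`. A rooted tree is determined by its parent map,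
which sends each `v ≠ r` to one of its neighbours in `G`; hence `T(G) ≤ ∏_{v ≠ r} deg v`.
The degrees of the `n - 1` non-root vertices sum to at most `2|E| ≤ 6n - 12 ≤ 6(n - 1)`, so by
AM–GM this product is at most `6^(n-1) < 6^n`.
-/

open Finset

namespace SimpleGraph.IsTree

variable {V : Type*} {T : SimpleGraph V}

noncomputable def parent (hT : T.IsTree) (r v : V) : V :=
  (hT.existsUnique_path v r).exists.choose.snd

lemma parent_eq_snd (hT : T.IsTree) {r v : V} {p : T.Walk v r} (hp : p.IsPath) :
    hT.parent r v = p.snd := by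
  have h := hT.existsUnique_path v r
  rw [parent, h.unique h.exists.choose_spec hp]

lemma parent_self (hT : T.IsTree) (r : V) : hT.parent r r = r :=
  hT.parent_eq_snd Walk.IsPath.nil

lemma adj_parent (hT : T.IsTree) {r v : V} (hv : v ≠ r) : T.Adj v (hT.parent r v) :=
  Walk.adj_snd (Walk.not_nil_of_ne hv)

lemma parent_eq_or_parent_eq_of_adj (hT : T.IsTree) {r a b : V} (hab : T.Adj a b) :
    (a ≠ r ∧ hT.parent r a = b) ∨ (b ≠ r ∧ hT.parent r b = a) := by
  obtain ⟨p, hp, -⟩ := hT.existsUnique_path a r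
  by_cases hb : b ∈ p.support
  · have hpar : hT.parent r a = b :=
      (hT.parent_eq_snd hp).trans (hT.isAcyclic.eq_snd_of_adj_start hp hab hb).symm
    refine .inl ⟨?_, hpar⟩
    rintro rfl
    exact hab.ne ((hT.parent_self a).symm.trans hpar)
  · refine .inr ⟨fun hbr => hb (hbr ▸ p.end_mem_support), ?_⟩
    exact (hT.parent_eq_snd (hp.cons hb)).trans (Walk.snd_cons p hab.symm)

lemma edgeSet_eq_range_parent (hT : T.IsTree) (r : V) :
    T.edgeSet = Set.range fun v : {v // v ≠ r} => s(v.1, hT.parent r v) := by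
  ext e
  refine Sym2.ind (fun a b => ⟨fun hab => ?_, ?_⟩) e
  · rcases hT.parent_eq_or_parent_eq_of_adj hab with ⟨ha, hpar⟩ | ⟨hb, hpar⟩
    · exact ⟨⟨a, ha⟩, by simp only [hpar]⟩
    · exact ⟨⟨b, hb⟩, by simp only [hpar, Sym2.eq_swap]⟩
  · rintro ⟨⟨v, hv⟩, hvab⟩
    rw [← hvab, mem_edgeSet]
    exact hT.adj_parent hv

lemma eq_of_parent_eq {T' : SimpleGraph V} (hT : T.IsTree) (hT' : T'.IsTree) (r : V)
    (h : ∀ v, v ≠ r → hT.parent r v = hT'.parent r v) : T = T' := by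
  refine edgeSet_injective ?_
  rw [hT.edgeSet_eq_range_parent r, hT'.edgeSet_eq_range_parent r]
  congr with v
  rw [h v v.2]

end SimpleGraph.IsTree

namespace IsSpanningTreeEdgeSet

variable {V : Type*} {G : SimpleGraph V} {s : Set (Sym2 V)}

lemma isTree (hs : IsSpanningTreeEdgeSet G s) : (fromEdgeSet s).IsTree :=
  ⟨hs.2.1, hs.2.2⟩

lemma fromEdgeSet_le (hs : IsSpanningTreeEdgeSet G s) : fromEdgeSet s ≤ G :=
  (SimpleGraph.fromEdgeSet_le _).2 (Set.sdiff_subset.trans hs.1)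

lemma edgeSet_fromEdgeSet (hs : IsSpanningTreeEdgeSet G s) : (fromEdgeSet s).edgeSet = s :=
  (edgeSet_eq_iff _ _).2
    ⟨rfl, Set.subset_compl_iff_disjoint_right.1 (hs.1.trans G.edgeSet_subset_compl_diagSet)⟩

end IsSpanningTreeEdgeSet

theorem ncard_setOf_isSpanningTreeEdgeSet_le_prod_degree {V : Type*} [Fintype V]
    [DecidableEq V] (G : SimpleGraph V) [DecidableRel G.Adj] (r : V) :
    {s | IsSpanningTreeEdgeSet G s}.ncard ≤ ∏ v ∈ univ.erase r, G.degree v := by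
  let parents : {s // IsSpanningTreeEdgeSet G s} → ∀ v : {v // v ≠ r}, G.neighborSet v :=
    fun s v => ⟨s.2.isTree.parent r v, s.2.fromEdgeSet_le (s.2.isTree.adj_parent v.2)⟩
  have hinj : Function.Injective parents := by
    rintro ⟨s, hs⟩ ⟨s', hs'⟩ h
    have hT : fromEdgeSet s = fromEdgeSet s' := hs.isTree.eq_of_parent_eq hs'.isTree r
      fun v hv => congrArg Subtype.val (congrFun h ⟨v, hv⟩)
    rw [Subtype.mk.injEq, ← hs.edgeSet_fromEdgeSet, ← hs'.edgeSet_fromEdgeSet, hT]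
  calc {s | IsSpanningTreeEdgeSet G s}.ncard
      = Nat.card {s // IsSpanningTreeEdgeSet G s} := (Nat.card_coe_set_eq _).symm
    _ ≤ Nat.card (∀ v : {v // v ≠ r}, G.neighborSet v) := Nat.card_le_card_of_injective _ hinj
    _ = ∏ v : {v // v ≠ r}, G.degree v := by
      rw [Nat.card_pi]
      simp only [Nat.card_eq_fintype_card, card_neighborSet_eq_degree]
    _ = ∏ v ∈ univ.erase r, G.degree v :=
      (prod_subtype (univ.erase r) (fun _ => by simp) fun v => G.degree v).symm

theorem Real.prod_le_pow_card_of_sum_le {ι : Type*} (s : Finset ι) {z : ι → ℝ} {c : ℝ}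
    (hz : ∀ i ∈ s, 0 ≤ z i) (h : ∑ i ∈ s, z i ≤ c * #s) : ∏ i ∈ s, z i ≤ c ^ #s := by
  rcases s.eq_empty_or_nonempty with rfl | hs
  · simp
  have hcard : (0 : ℝ) < #s := by exact_mod_cast hs.card_pos
  have hgm := Real.geom_mean_le_arith_mean s (fun _ => 1) z (by simp) (by simpa using hcard) hz
  simp only [Real.rpow_one, one_mul, sum_const, nsmul_eq_mul, mul_one] at hgm
  calc ∏ i ∈ s, z i = ((∏ i ∈ s, z i) ^ (#s : ℝ)⁻¹) ^ #s :=
        (Real.rpow_inv_natCast_pow (prod_nonneg hz) hs.card_ne_zero).symm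
    _ ≤ c ^ #s := pow_le_pow_left₀ (by have := prod_nonneg hz; positivity)
        (hgm.trans ((div_le_iff₀ hcard).2 h)) _

theorem spanning_trees_lt_six_pow_general
    {V : Type*} [Fintype V] [DecidableEq V]
    (G : SimpleGraph V) [DecidableRel G.Adj]
    (hn : 3 ≤ Fintype.card V)
    (hedges : G.edgeFinset.card ≤ 3 * Fintype.card V - 6) :
    {s : Set (Sym2 V) | IsSpanningTreeEdgeSet G s}.ncard < 6 ^ Fintype.card V := by
  obtain ⟨r⟩ : Nonempty V := Fintype.card_pos_iff.mp (by omega)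
  set t := univ.erase r
  have hcard : #t = Fintype.card V - 1 := by simp [t, card_erase_of_mem]
  have hsum : ∑ v ∈ t, G.degree v ≤ 6 * #t := by
    have hsub : ∑ v ∈ t, G.degree v ≤ ∑ v, G.degree v :=
      sum_le_sum_of_subset (erase_subset r univ)
    have hdeg := G.sum_degrees_eq_twice_card_edges
    omega
  have hprod : ∏ v ∈ t, G.degree v ≤ 6 ^ #t := by
    exact_mod_cast Real.prod_le_pow_card_of_sum_le t (z := fun v => (G.degree v : ℝ)) (c := 6)
      (fun v _ => by positivity) (by exact_mod_cast hsum)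
  calc {s : Set (Sym2 V) | IsSpanningTreeEdgeSet G s}.ncard
      ≤ ∏ v ∈ t, G.degree v := ncard_setOf_isSpanningTreeEdgeSet_le_prod_degree G r
    _ ≤ 6 ^ #t := hprod
    _ < 6 ^ Fintype.card V := pow_lt_pow_right₀ (by norm_num) (by omega)

/-- **Ribó Mor's proposition, part 2.** Every finite connected simple graph on `n ≥ 3`
vertices with at most `3n - 6` edges (as is every planar graph on `n ≥ 3` vertices) has
fewer than `6^n` spanning trees. -/
theorem spanning_trees_lt_six_pow
    {V : Type*} [Fintype V] [DecidableEq V]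
    (G : SimpleGraph V) [DecidableRel G.Adj] (hconn : G.Connected)
    (hn : 3 ≤ Fintype.card V)
    (hedges : G.edgeFinset.card ≤ 3 * Fintype.card V - 6) :
    {s : Set (Sym2 V) | IsSpanningTreeEdgeSet G s}.ncard < 6 ^ Fintype.card V :=
  spanning_trees_lt_six_pow_general G hn hedges
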